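/- (Exact first-order entropy change under a natural policy gradient step.) Let N ≥ 1, let a ∈ ℝ^N be a logits vector with softmax distribution p = softmax(a), and let A ∈ ℝ^N be a fixed advantage vector. For η ∈ ℝ define h(η) = H(softmax(a + η A)), where H(q) = −∑_{n=1}^N q_n log q_n is the Shannon entropy. Then h is differentiable at η = 0 and h′(0) = −Cov_{n∼p}(log p_n, A_n) = −( ∑_{n=1}^N p_n (log p_n) A_n − (∑_{n=1}^N p_n log p_n)(∑_{n=1}^N p_n A_n) ). -/

import Mathlib

/-!
Along the logit path `a + η • A` each softmax coordinate moves at rate `p n * (A n - Ā)`,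
where `Ā = ∑ m, p m * A m`. Since `d/dx (x log x) = log x + 1`, the entropy moves at rate
`-∑ n, p n * (A n - Ā) * (log (p n) + 1)`; the centred deviations `p n * (A n - Ā)` sum to zero,
which kills the `+ 1` and turns what is left into minus the covariance of `log p` and `A`.
-/

/-- The softmax distribution induced by a logits vector `a : ℝ^N`. -/
noncomputable def softmax {N : ℕ} (a : Fin N → ℝ) : Fin N → ℝ :=
  fun n => Real.exp (a n) / ∑ m, Real.exp (a m)

/-- The Shannon entropy (with natural logarithm) of a vector `p : ℝ^N`,
`H(p) = -∑ n, p n * log (p n)`. -/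
noncomputable def shannonEntropy {N : ℕ} (p : Fin N → ℝ) : ℝ :=
  -∑ n, p n * Real.log (p n)

open Finset Real

variable {N : ℕ}

lemma sum_exp_pos (a : Fin N → ℝ) (n : Fin N) : 0 < ∑ m, exp (a m) :=
  sum_pos (fun m _ => exp_pos (a m)) ⟨n, mem_univ n⟩

lemma softmax_pos (a : Fin N → ℝ) (n : Fin N) : 0 < softmax a n :=
  div_pos (exp_pos (a n)) (sum_exp_pos a n)

lemma sum_softmax [Nonempty (Fin N)] (a : Fin N → ℝ) : ∑ n, softmax a n = 1 := by
  obtain ⟨n⟩ := ‹Nonempty (Fin N)›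
  simp only [softmax, ← sum_div]
  exact div_self (sum_exp_pos a n).ne'

lemma sum_softmax_mul_sub_mean (a A : Fin N → ℝ) :
    ∑ n, softmax a n * (A n - ∑ m, softmax a m * A m) = 0 := by
  rcases isEmpty_or_nonempty (Fin N) with h | h
  · simp
  · simp [mul_sub, sum_sub_distrib, ← sum_mul, sum_softmax]

lemma hasDerivAt_softmax {b : ℝ → Fin N → ℝ} {b' : Fin N → ℝ} {t : ℝ}
    (hb : ∀ n, HasDerivAt (fun s => b s n) (b' n) t) (n : Fin N) :
    HasDerivAt (fun s => softmax (b s) n)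
      (softmax (b t) n * (b' n - ∑ m, softmax (b t) m * b' m)) t := by
  have hZ : HasDerivAt (fun s => ∑ m, exp (b s m)) (∑ m, exp (b t m) * b' m) t :=
    HasDerivAt.fun_sum fun m _ => (hb m).exp
  have hZ0 := (sum_exp_pos (b t) n).ne'
  refine ((hb n).exp.fun_div hZ hZ0).congr_deriv ?_
  simp only [softmax, div_mul_eq_mul_div, ← sum_div]
  field_simp

lemma hasDerivAt_shannonEntropy {p : ℝ → Fin N → ℝ} {p' : Fin N → ℝ} {t : ℝ}
    (hp : ∀ n, HasDerivAt (fun s => p s n) (p' n) t) (hp0 : ∀ n, p t n ≠ 0) :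
    HasDerivAt (fun s => shannonEntropy (p s)) (-∑ n, (log (p t n) + 1) * p' n) t := by
  have hterm (n : Fin N) :
      HasDerivAt (fun s => p s n * log (p s n)) ((log (p t n) + 1) * p' n) t :=
    (hasDerivAt_mul_log (hp0 n)).comp (h₂ := fun x => x * log x) t (hp n)
  exact (HasDerivAt.fun_sum fun n _ => hterm n).neg

theorem entropy_deriv_natural_policy_gradient_step_general
    (N : ℕ) (a A : Fin N → ℝ) :
    HasDerivAt (fun η : ℝ => shannonEntropy (softmax (a + η • A)))
      (-((∑ n, softmax a n * Real.log (softmax a n) * A n)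
          - (∑ n, softmax a n * Real.log (softmax a n)) * (∑ n, softmax a n * A n)))
      0 := by
  have hlogits : ∀ n, HasDerivAt (fun η : ℝ => (a + η • A) n) (A n) 0 := fun n => by
    simpa using ((hasDerivAt_id (0 : ℝ)).mul_const (A n)).const_add (a n)
  have hsoftmax := hasDerivAt_softmax hlogits
  have hentropy := hasDerivAt_shannonEntropy hsoftmax (fun n => (softmax_pos _ n).ne')
  simp only [zero_smul, add_zero] at hentropy
  refine hentropy.congr_deriv ?_
  have hexpand : ∑ n, (log (softmax a n) + 1) * (softmax a n * (A n - ∑ m, softmax a m * A m))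
      = ∑ n, softmax a n * log (softmax a n) * A n
          - (∑ n, softmax a n * log (softmax a n)) * ∑ m, softmax a m * A m
        + ∑ n, softmax a n * (A n - ∑ m, softmax a m * A m) := by
    rw [sum_mul, ← sum_sub_distrib, ← sum_add_distrib]
    exact sum_congr rfl fun n _ => by ring
  linear_combination -hexpand - sum_softmax_mul_sub_mean a A

/-- Exact first-order entropy change under a natural policy gradient step:
with `p = softmax a`, the map `h(η) = H(softmax (a + η • A))` has derivative at `η = 0`
equal to `-Cov_{n ∼ p}(log p_n, A_n)
 = -(∑ n, p n * log (p n) * A n - (∑ n, p n * log (p n)) * (∑ n, p n * A n))`. -/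
theorem entropy_deriv_natural_policy_gradient_step
    (N : ℕ) (hN : 1 ≤ N) (a A : Fin N → ℝ) :
    HasDerivAt (fun η : ℝ => shannonEntropy (softmax (a + η • A)))
      (-((∑ n, softmax a n * Real.log (softmax a n) * A n)
          - (∑ n, softmax a n * Real.log (softmax a n)) * (∑ n, softmax a n * A n)))
      0 :=
  entropy_deriv_natural_policy_gradient_step_general N a A
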